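/- In the free group F₂ on {a, b}, the language L = {(a a a⁻¹)ⁿ b^(2n) : n ∈ ℕ} over Σ = {a, b, a⁻¹, b⁻¹} is a visibly pushdown language for the partition Σ_c = {a}, Σ_i = {a⁻¹, b⁻¹}, Σ_r = {b}, but the set of reduced words with the same images, r(L) = {aⁿ b^(2n) : n ∈ ℕ}, is not a visibly pushdown language for any partition of Σ. -/

import Mathlib

inductive VKind | call | internal | response
deriving DecidableEq

/-- A (nondeterministic) visibly pushdown automaton over alphabet `A`
partitioned by `kind` into call, internal and response letters. -/
structure VPA (A : Type) (kind : A → VKind) where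
  Q : Type
  Γ : Type
  [finQ : Fintype Q]
  [finΓ : Fintype Γ]
  init : Q
  accept : Set Q
  /-- transitions on call letters: push one symbol, do not inspect the stack -/
  δc : Q → A → Set (Q × Γ)
  /-- transitions on internal letters: do not inspect or modify the stack -/
  δi : Q → A → Set Q
  /-- transitions on response letters: pop the topmost stack symbol -/
  δr : Q → A → Γ → Set Q
  /-- transitions on response letters read on the empty stack (bottom symbol) -/
  δb : Q → A → Set Q

namespace VPA

variable {A : Type} {kind : A → VKind}

inductive Steps (M : VPA A kind) : M.Q × List M.Γ → List A → M.Q × List M.Γ → Prop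
  | nil (c) : Steps M c [] c
  | call {q s a q' γ w c} : kind a = .call → (q', γ) ∈ M.δc q a →
      Steps M (q', γ :: s) w c → Steps M (q, s) (a :: w) c
  | internal {q s a q' w c} : kind a = .internal → q' ∈ M.δi q a →
      Steps M (q', s) w c → Steps M (q, s) (a :: w) c
  | pop {q γ s a q' w c} : kind a = .response → q' ∈ M.δr q a γ →
      Steps M (q', s) w c → Steps M (q, γ :: s) (a :: w) c
  | popEmpty {q a q' w c} : kind a = .response → q' ∈ M.δb q a →
      Steps M (q', []) w c → Steps M (q, []) (a :: w) c

/-- A VPA accepts a word if reading it from the initial state with empty stack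
can end in an accepting state (with arbitrary stack contents). -/
def Accepts (M : VPA A kind) (w : List A) : Prop :=
  ∃ c : M.Q × List M.Γ, M.Steps (M.init, []) w c ∧ c.1 ∈ M.accept

end VPA

/-- `L` is a visibly pushdown language over the partition `kind`. -/
def IsVPL {A : Type} (kind : A → VKind) (L : Set (List A)) : Prop :=
  ∃ M : VPA A kind, L = {w | M.Accepts w}

inductive F2L | a | b | ai | bi
deriving DecidableEq

/-- Projection onto the free group F₂ = F(a,b), with `true ↦ a`, `false ↦ b`. -/
def projF2 (w : List F2L) : FreeGroup Bool :=
  (w.map (fun l => match l with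
    | F2L.a => FreeGroup.of true
    | F2L.ai => (FreeGroup.of true)⁻¹
    | F2L.b => FreeGroup.of false
    | F2L.bi => (FreeGroup.of false)⁻¹)).prod

/-- The formal inverse letter. -/
def invF2L : F2L → F2L
  | .a => .ai
  | .ai => .a
  | .b => .bi
  | .bi => .b

/-- A word is freely reduced if no letter is followed by its formal inverse. -/
def ReducedF2 (w : List F2L) : Prop :=
  List.Chain' (fun x y => y ≠ invF2L x) w

def kindF2 : F2L → VKind
  | .a => .call
  | .b => .response
  | _ => .internal

/-- The language L = {(aaa⁻¹)ⁿ b^(2n)} over {a,b,a⁻¹,b⁻¹}. -/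
def Lmix : Set (List F2L) :=
  {w | ∃ n : ℕ, w = (List.replicate n [F2L.a, F2L.a, F2L.ai]).flatten ++
    List.replicate (2 * n) F2L.b}

/-- The set of reduced words with the same images in F₂ as the words of `Lmix`. -/
def rLmix : Set (List F2L) :=
  {w | ReducedF2 w ∧ projF2 w ∈ projF2 '' Lmix}

/-!
The automaton for `Lmix` pushes a symbol on every `a`, the very first one being a bottom marker,
and pops one symbol per `b`; it accepts when it pops the bottom marker, i.e. after exactly as many
`b`s as `a`s, and the internal letter `a⁻¹` only enforces the block shape `aaa⁻¹`.

A freely reduced word is determined by its image in the free group, so `r(Lmix)` consists of the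
reduced words `aⁿ b²ⁿ`.

For `{aⁿ b²ⁿ}` and any partition, cut each accepting run at a point where the stack is empty or
will never be inspected again: after `aⁿ` if `a` is not a call letter, after `aⁿ` if `b` is not a
response letter, and after `aⁿ bⁿ` otherwise. Two different `n` reach the same state there, and
swapping the tails yields an accepted word `aᵐ bᵏ` with `k ≠ 2m`.
-/

namespace Lmix

inductive State | start | firstA | secondA | blockEnd | popping | done
  deriving DecidableEq

instance : Fintype State :=
  ⟨{.start, .firstA, .secondA, .blockEnd, .popping, .done}, fun q => by cases q <;> simp⟩

inductive StackSym | bottom | mark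
  deriving DecidableEq

instance : Fintype StackSym := ⟨{.bottom, .mark}, fun γ => by cases γ <;> simp⟩

def callTrans : State → F2L → Set (State × StackSym)
  | .start, .a => {(.firstA, .bottom)}
  | .firstA, .a => {(.secondA, .mark)}
  | .blockEnd, .a => {(.firstA, .mark)}
  | _, _ => ∅

def internalTrans : State → F2L → Set State
  | .secondA, .ai => {.blockEnd}
  | _, _ => ∅

def returnTrans : State → F2L → StackSym → Set State
  | .blockEnd, .b, .mark | .popping, .b, .mark => {.popping}
  | .blockEnd, .b, .bottom | .popping, .b, .bottom => {.done}
  | _, _, _ => ∅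

abbrev vpa : VPA F2L kindF2 where
  Q := State
  Γ := StackSym
  init := .start
  accept := {.start, .done}
  δc := callTrans
  δi := internalTrans
  δr := returnTrans
  δb _ _ := ∅

def blocks (j : ℕ) : List F2L := (List.replicate j [F2L.a, F2L.a, F2L.ai]).flatten

theorem blocks_succ (j : ℕ) : blocks (j + 1) = .a :: .a :: .ai :: blocks j := by
  simp [blocks, List.replicate_succ]

def markDepth : List StackSym → Option ℕ
  | [] => none
  | .bottom :: _ => some 0
  | .mark :: s => (markDepth s).map (· + 1)

-- A stack with `k` marks above the bottom marker needs `k + 1` pops; each block pushes two more.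
def blockLang (s : List StackSym) : Set (List F2L) :=
  {w | ∃ j k, markDepth s = some k ∧ w = blocks j ++ List.replicate (2 * j + k + 1) F2L.b}

def acceptedFrom : State → List StackSym → Set (List F2L)
  | .start, s => insert [] ((fun v => .a :: .a :: .ai :: v) '' blockLang (.mark :: .bottom :: s))
  | .firstA, s => (fun v => .a :: .ai :: v) '' blockLang (.mark :: s)
  | .secondA, s => (.ai :: ·) '' blockLang s
  | .blockEnd, s => blockLang s
  | .popping, s => {w | ∃ k, markDepth s = some k ∧ w = List.replicate (k + 1) F2L.b}
  | .done, _ => {[]}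

theorem cons_block_mem_blockLang {s : List StackSym} {w : List F2L}
    (h : w ∈ blockLang (.mark :: .mark :: s)) : .a :: .a :: .ai :: w ∈ blockLang s := by
  obtain ⟨j, k, hk, rfl⟩ := h
  simp only [markDepth, Option.map_eq_some_iff] at hk
  obtain ⟨_, ⟨k, hk, rfl⟩, rfl⟩ := hk
  refine ⟨j + 1, k, hk, ?_⟩
  simp [blocks, List.replicate_succ, show 2 * (j + 1) + k + 1 = 2 * j + (k + 1 + 1) + 1 by ring]

theorem replicate_mem_blockLang {s : List StackSym} {k : ℕ} (h : markDepth s = some k) :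
    List.replicate (k + 1) F2L.b ∈ blockLang s :=
  ⟨0, k, h, by simp [blocks]⟩

theorem mem_acceptedFrom_of_steps {c c' : vpa.Q × List vpa.Γ} {w : List F2L}
    (h : vpa.Steps c w c') (hc' : c'.1 ∈ vpa.accept) : w ∈ acceptedFrom c.1 c.2 := by
  induction h with
  | nil c =>
    rcases c with ⟨_ | _ | _ | _ | _ | _, s⟩ <;> simp_all [vpa, acceptedFrom]
  | @call q s x q' γ w c hx hq _ ih =>
    have ih := ih hc'
    cases x <;> cases q <;> simp_all [vpa, kindF2, callTrans, acceptedFrom]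
    obtain ⟨v, hv, rfl⟩ := ih
    exact cons_block_mem_blockLang hv
  | @internal q s x q' w c hx hq _ ih =>
    have ih := ih hc'
    cases x <;> cases q <;> simp_all [vpa, kindF2, internalTrans, acceptedFrom]
  | @pop q γ s x q' w c hx hq _ ih =>
    have ih := ih hc'
    cases x <;> cases q <;> cases γ <;> simp_all [vpa, kindF2, returnTrans, acceptedFrom]
    · exact replicate_mem_blockLang (k := 0) rfl
    · obtain ⟨k, hk, rfl⟩ := ih
      exact replicate_mem_blockLang (k := k + 1) (by simp [markDepth, hk])
    · exact ⟨0, rfl, rfl⟩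
    · obtain ⟨k, hk, rfl⟩ := ih
      exact ⟨k + 1, by simp [markDepth, hk], rfl⟩
  | popEmpty _ hq => simp [vpa] at hq

theorem exists_steps_replicate_b {q : State} (hq : q = .blockEnd ∨ q = .popping)
    {s : List StackSym} {k : ℕ} (h : markDepth s = some k) :
    ∃ t, vpa.Steps (q, s) (List.replicate (k + 1) F2L.b) (.done, t) := by
  induction s generalizing q k with
  | nil => simp [markDepth] at h
  | cons γ s ih =>
    cases γ with
    | bottom =>
      obtain rfl : k = 0 := by simpa [markDepth] using h.symm
      exact ⟨s, .pop rfl (by rcases hq with rfl | rfl <;> simp [returnTrans]) (.nil _)⟩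
    | mark =>
      obtain ⟨k, hk, rfl⟩ := Option.map_eq_some_iff.1 h
      obtain ⟨t, ht⟩ := ih (Or.inr rfl) hk
      exact ⟨t, .pop rfl (by rcases hq with rfl | rfl <;> simp [returnTrans]) ht⟩

theorem exists_steps_of_mem_blockLang {s : List StackSym} {w : List F2L}
    (h : w ∈ blockLang s) : ∃ t, vpa.Steps (.blockEnd, s) w (.done, t) := by
  obtain ⟨j, k, hk, rfl⟩ := h
  induction j generalizing s k with
  | zero => simpa [blocks] using exists_steps_replicate_b (Or.inl rfl) hk
  | succ j ih =>
    obtain ⟨t, ht⟩ := ih (s := .mark :: .mark :: s) (k + 2) (by simp [markDepth, hk])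
    rw [show 2 * (j + 1) + k + 1 = 2 * j + (k + 2) + 1 by ring, blocks_succ]
    exact ⟨t, .call rfl (Set.mem_singleton _)
      (.call rfl (Set.mem_singleton _) (.internal rfl (Set.mem_singleton _) ht))⟩

theorem vpa_accepts_iff {w : List F2L} : vpa.Accepts w ↔ w ∈ Lmix := by
  constructor
  · rintro ⟨c, hw, hc⟩
    rcases mem_acceptedFrom_of_steps hw hc with rfl | ⟨_, ⟨j, k, hk, rfl⟩, rfl⟩
    · exact ⟨0, rfl⟩
    · obtain rfl : k = 1 := by simpa [markDepth] using hk.symm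
      refine ⟨j + 1, ?_⟩
      rw [show 2 * (j + 1) = 2 * j + 1 + 1 by ring]
      simp [blocks, List.replicate_succ]
  · rintro ⟨_ | n, rfl⟩
    · exact ⟨(.start, []), .nil _, by simp⟩
    · obtain ⟨t, ht⟩ := exists_steps_of_mem_blockLang (s := [.mark, .bottom])
        ⟨n, 1, rfl, rfl⟩
      rw [show 2 * (n + 1) = 2 * n + 1 + 1 by ring]
      exact ⟨(.done, t), .call rfl (Set.mem_singleton _)
        (.call rfl (Set.mem_singleton _) (.internal rfl (Set.mem_singleton _) ht)),
        by simp⟩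

end Lmix

theorem isVPL_Lmix : IsVPL kindF2 Lmix :=
  ⟨Lmix.vpa, Set.ext fun _ => Lmix.vpa_accepts_iff.symm⟩

def F2L.toLetter : F2L → Bool × Bool
  | .a => (true, true)
  | .ai => (true, false)
  | .b => (false, true)
  | .bi => (false, false)

theorem F2L.toLetter_injective : Function.Injective F2L.toLetter := by
  intro x y h
  cases x <;> cases y <;> simp_all [F2L.toLetter]

theorem projF2_append (u v : List F2L) : projF2 (u ++ v) = projF2 u * projF2 v := by
  simp [projF2]

theorem projF2_eq_mk (w : List F2L) : projF2 w = FreeGroup.mk (w.map F2L.toLetter) := by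
  induction w with
  | nil => rfl
  | cons x w ih =>
    rw [← List.singleton_append, projF2_append, ih, List.map_append, ← FreeGroup.mul_mk]
    cases x <;> simp [projF2, F2L.toLetter, FreeGroup.of, FreeGroup.inv_mk, FreeGroup.invRev]

theorem ReducedF2.isReduced_map_toLetter {w : List F2L} (h : ReducedF2 w) :
    FreeGroup.IsReduced (w.map F2L.toLetter) := by
  refine (List.isChain_map _).2 (h.imp fun x y hxy => ?_)
  cases x <;> cases y <;> simp_all [F2L.toLetter, invF2L]

theorem ReducedF2.eq_of_projF2_eq {w w' : List F2L} (hw : ReducedF2 w) (hw' : ReducedF2 w')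
    (h : projF2 w = projF2 w') : w = w' := by
  have := congrArg FreeGroup.toWord h
  rw [projF2_eq_mk, projF2_eq_mk, FreeGroup.toWord_mk, FreeGroup.toWord_mk,
    hw.isReduced_map_toLetter.reduce_eq, hw'.isReduced_map_toLetter.reduce_eq] at this
  exact (List.map_injective_iff.2 F2L.toLetter_injective) this

theorem reducedF2_replicate_append_replicate (m n : ℕ) :
    ReducedF2 (List.replicate m F2L.a ++ List.replicate n F2L.b) := by
  refine List.Pairwise.isChain (List.pairwise_of_forall_mem_list fun x hx y hy => ?_)
  simp only [List.mem_append, List.mem_replicate] at hx hy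
  rcases hx with ⟨-, rfl⟩ | ⟨-, rfl⟩ <;> rcases hy with ⟨-, rfl⟩ | ⟨-, rfl⟩ <;> simp [invF2L]

theorem projF2_replicate (n : ℕ) (x : F2L) : projF2 (List.replicate n x) = projF2 [x] ^ n := by
  simp [projF2, List.map_replicate, List.prod_replicate]

theorem projF2_flatten_replicate (n : ℕ) (w : List F2L) :
    projF2 (List.replicate n w).flatten = projF2 w ^ n := by
  induction n with
  | zero => rfl
  | succ n ih => rw [List.replicate_succ', List.flatten_append, projF2_append, ih, pow_succ,
      List.flatten_singleton]

theorem rLmix_eq :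
    rLmix = {w | ∃ n : ℕ, w = List.replicate n F2L.a ++ List.replicate (2 * n) F2L.b} := by
  have projF2_Lmix (n : ℕ) : projF2 ((List.replicate n [F2L.a, F2L.a, F2L.ai]).flatten ++
      List.replicate (2 * n) F2L.b) =
      projF2 (List.replicate n F2L.a ++ List.replicate (2 * n) F2L.b) := by
    rw [projF2_append, projF2_append, projF2_flatten_replicate, projF2_replicate]
    simp [projF2]
  ext w
  constructor
  · rintro ⟨hw, _, ⟨n, rfl⟩, hproj⟩
    exact ⟨n, hw.eq_of_projF2_eq (reducedF2_replicate_append_replicate _ _)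
      (hproj.symm.trans (projF2_Lmix n))⟩
  · rintro ⟨n, rfl⟩
    exact ⟨reducedF2_replicate_append_replicate _ _, _, ⟨n, rfl⟩, projF2_Lmix n⟩

namespace VPA

variable {A : Type} {kind : A → VKind} {M : VPA A kind}

theorem steps_append {w₁ w₂ : List A} {c c' : M.Q × List M.Γ} :
    M.Steps c (w₁ ++ w₂) c' ↔ ∃ c'', M.Steps c w₁ c'' ∧ M.Steps c'' w₂ c' := by
  constructor
  · induction w₁ generalizing c with
    | nil => exact fun h => ⟨c, .nil c, h⟩
    | cons x w ih =>
      intro h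
      cases h with
      | call hk hm h => obtain ⟨c'', h₁, h₂⟩ := ih h; exact ⟨c'', .call hk hm h₁, h₂⟩
      | internal hk hm h => obtain ⟨c'', h₁, h₂⟩ := ih h; exact ⟨c'', .internal hk hm h₁, h₂⟩
      | pop hk hm h => obtain ⟨c'', h₁, h₂⟩ := ih h; exact ⟨c'', .pop hk hm h₁, h₂⟩
      | popEmpty hk hm h => obtain ⟨c'', h₁, h₂⟩ := ih h; exact ⟨c'', .popEmpty hk hm h₁, h₂⟩
  · rintro ⟨c'', h₁, h₂⟩
    induction h₁ with
    | nil => exact h₂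
    | call hk hm _ ih => exact .call hk hm (ih h₂)
    | internal hk hm _ ih => exact .internal hk hm (ih h₂)
    | pop hk hm _ ih => exact .pop hk hm (ih h₂)
    | popEmpty hk hm _ ih => exact .popEmpty hk hm (ih h₂)

theorem accepts_append {u v : List A} :
    M.Accepts (u ++ v) ↔ ∃ q s, M.Steps (M.init, []) u (q, s) ∧
      ∃ c : M.Q × List M.Γ, M.Steps (q, s) v c ∧ c.1 ∈ M.accept := by
  simp only [Accepts, steps_append, Prod.exists]
  grind

namespace Steps

variable {w : List A} {c c' : M.Q × List M.Γ}

theorem length_stack_of_forall_call (h : M.Steps c w c') (hw : ∀ x ∈ w, kind x = .call) :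
    c'.2.length = c.2.length + w.length := by
  induction h with
  | nil => rfl
  | call _ _ _ ih => simp only [List.mem_cons, forall_eq_or_imp] at hw; simp [ih hw.2]; omega
  | internal hk | pop hk | popEmpty hk => simp [hw _ List.mem_cons_self] at hk

theorem stack_eq_drop_of_forall_response (h : M.Steps c w c')
    (hw : ∀ x ∈ w, kind x = .response) : c'.2 = c.2.drop w.length := by
  induction h with
  | nil => rfl
  | call hk | internal hk => simp [hw _ List.mem_cons_self] at hk
  | pop _ _ _ ih | popEmpty _ _ _ ih =>
    simp only [List.mem_cons, forall_eq_or_imp] at hw; simp [ih hw.2]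

theorem stack_suffix_of_forall_ne_call (h : M.Steps c w c') (hw : ∀ x ∈ w, kind x ≠ .call) :
    c'.2 <:+ c.2 := by
  induction h with
  | nil => exact List.suffix_refl _
  | call hk => exact absurd hk (hw _ List.mem_cons_self)
  | internal _ _ _ ih | popEmpty _ _ _ ih =>
    simp only [List.mem_cons, forall_eq_or_imp] at hw; exact ih hw.2
  | pop _ _ _ ih =>
    simp only [List.mem_cons, forall_eq_or_imp] at hw; exact (ih hw.2).trans (List.suffix_cons _ _)

theorem exists_of_forall_ne_response (h : M.Steps c w c') (hw : ∀ x ∈ w, kind x ≠ .response)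
    (s : List M.Γ) : ∃ s', M.Steps (c.1, s) w (c'.1, s') := by
  induction h generalizing s with
  | nil => exact ⟨s, .nil _⟩
  | @call _ _ _ _ γ _ _ hk hm _ ih =>
    simp only [List.mem_cons, forall_eq_or_imp] at hw
    obtain ⟨s', h⟩ := ih hw.2 (γ :: s)
    exact ⟨s', .call hk hm h⟩
  | internal hk hm _ ih =>
    simp only [List.mem_cons, forall_eq_or_imp] at hw
    obtain ⟨s', h⟩ := ih hw.2 s
    exact ⟨s', .internal hk hm h⟩
  | pop hk | popEmpty hk => exact absurd hk (hw _ List.mem_cons_self)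

end Steps

theorem exists_ne_accepts_append {u v : ℕ → List A} (P : List M.Γ → Prop)
    (h : ∀ n, ∃ q, (∃ s, P s ∧ M.Steps (M.init, []) (u n) (q, s)) ∧
      ∀ s, P s → ∃ c : M.Q × List M.Γ, M.Steps (q, s) (v n) c ∧ c.1 ∈ M.accept) :
    ∃ m n, m ≠ n ∧ M.Accepts (u m ++ v n) := by
  choose q hu hv using h
  have := M.finQ
  obtain ⟨m, n, hmn, hq⟩ := Finite.exists_ne_map_eq_of_infinite q
  obtain ⟨s, hs, hum⟩ := hu m
  exact ⟨m, n, hmn, accepts_append.2 ⟨q n, s, hq ▸ hum, hv n s hs⟩⟩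

theorem exists_ne_accepts_append_of_stack_eq_nil {u v : ℕ → List A}
    (hu : ∀ n {c}, M.Steps (M.init, []) (u n) c → c.2 = [])
    (h : ∀ n, M.Accepts (u n ++ v n)) : ∃ m n, m ≠ n ∧ M.Accepts (u m ++ v n) := by
  refine exists_ne_accepts_append (· = []) fun n => ?_
  obtain ⟨q, s, hun, hvn⟩ := accepts_append.1 (h n)
  obtain rfl : s = [] := hu n hun
  exact ⟨q, ⟨[], rfl, hun⟩, fun _ hs => hs ▸ hvn⟩

theorem exists_ne_accepts_append_of_forall_ne_response {u v : ℕ → List A}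
    (hv : ∀ n, ∀ x ∈ v n, kind x ≠ .response)
    (h : ∀ n, M.Accepts (u n ++ v n)) : ∃ m n, m ≠ n ∧ M.Accepts (u m ++ v n) := by
  refine exists_ne_accepts_append (fun _ => True) fun n => ?_
  obtain ⟨q, s, hun, c, hvn, hc⟩ := accepts_append.1 (h n)
  refine ⟨q, ⟨s, trivial, hun⟩, fun t _ => ?_⟩
  obtain ⟨t', hvt⟩ := hvn.exists_of_forall_ne_response (hv n) t
  exact ⟨(c.1, t'), hvt, hc⟩

theorem stack_eq_nil_of_steps_replicate_append_replicate {a b : A} (ha : kind a = .call)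
    (hb : kind b = .response) {n : ℕ} {q : M.Q} {c : M.Q × List M.Γ}
    (h : M.Steps (q, []) (List.replicate n a ++ List.replicate n b) c) : c.2 = [] := by
  obtain ⟨c', hpush, hpop⟩ := steps_append.1 h
  have hlen := hpush.length_stack_of_forall_call (by simp [ha])
  rw [hpop.stack_eq_drop_of_forall_response (by simp [hb]), List.drop_eq_nil_iff]
  simp_all

end VPA

theorem replicate_append_replicate_eq_iff {A : Type} {a b : A} (hab : a ≠ b) {m n m' n' : ℕ} :
    List.replicate m a ++ List.replicate n b = List.replicate m' a ++ List.replicate n' b ↔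
      m = m' ∧ n = n' := by
  classical
  refine ⟨fun h => ⟨?_, ?_⟩, fun h => h.1 ▸ h.2 ▸ rfl⟩
  · simpa [List.count_replicate, hab.symm] using congrArg (List.count a) h
  · simpa [List.count_replicate, hab] using congrArg (List.count b) h

theorem not_isVPL_replicate_append_replicate_two_mul {A : Type} {a b : A} (hab : a ≠ b)
    (kind : A → VKind) :
    ¬ IsVPL kind {w | ∃ n : ℕ, w = List.replicate n a ++ List.replicate (2 * n) b} := by
  rintro ⟨M, hM⟩
  have accepts_iff (m k : ℕ) :
      M.Accepts (List.replicate m a ++ List.replicate k b) ↔ k = 2 * m := by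
    rw [show M.Accepts _ ↔ _ ∈ {w | M.Accepts w} from Iff.rfl, ← hM]
    simp [replicate_append_replicate_eq_iff hab]
  have hacc (n : ℕ) := (accepts_iff n (2 * n)).2 rfl
  by_cases ha : kind a = .call
  · by_cases hb : kind b = .response
    · obtain ⟨m, n, hmn, h⟩ := M.exists_ne_accepts_append_of_stack_eq_nil
        (u := fun n => List.replicate n a ++ List.replicate n b) (v := fun n => List.replicate n b)
        (fun _ _ h => VPA.stack_eq_nil_of_steps_replicate_append_replicate ha hb h)
        (fun n => by rw [List.append_assoc, ← List.replicate_add, ← two_mul]; exact hacc n)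
      have := (accepts_iff m (m + n)).1 (by rwa [List.replicate_add, ← List.append_assoc])
      omega
    · obtain ⟨m, n, hmn, h⟩ := M.exists_ne_accepts_append_of_forall_ne_response
        (v := fun n => List.replicate (2 * n) b) (by simp [hb]) hacc
      have := (accepts_iff m (2 * n)).1 h
      omega
  · obtain ⟨m, n, hmn, h⟩ := M.exists_ne_accepts_append_of_stack_eq_nil
      (u := fun n => List.replicate n a) (v := fun n => List.replicate (2 * n) b)
      (fun _ _ h => List.suffix_nil.1 (h.stack_suffix_of_forall_ne_call (by simp [ha]))) hacc
    have := (accepts_iff m (2 * n)).1 h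
    omega

/-- In F₂, the language {(aaa⁻¹)ⁿb^(2n)} is a VPL for the partition
Σ_c = {a}, Σ_i = {a⁻¹, b⁻¹}, Σ_r = {b}, but its set of reduced
representatives, {aⁿb^(2n)}, is not a VPL for any partition. -/
theorem freeReduction_not_preserve_VPL :
    IsVPL kindF2 Lmix ∧
    rLmix = {w | ∃ n : ℕ, w = List.replicate n F2L.a ++ List.replicate (2 * n) F2L.b} ∧
    (∀ kind : F2L → VKind, ¬ IsVPL kind rLmix) := by
  refine ⟨isVPL_Lmix, rLmix_eq, fun kind => ?_⟩
  rw [rLmix_eq]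
  exact not_isVPL_replicate_append_replicate_two_mul (by decide) kind
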